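/- The value ζ_p := max_{c ∈ Δ_A} ( −α ‖c‖_q + ⟨c, b⟩ ) satisfies the equation ∑_{i : b_i ≥ ζ_p} (b_i − ζ_p)^p = α^p. -/

import Mathlib

/-!
Write `d = (b - ζ)⁺`. Since `ζ` is attained at some `c` in the simplex, Hölder's inequality gives
`α ‖c‖_q = ⟨c, b - ζ⟩ ≤ ⟨c, d⟩ ≤ ‖d‖_p ‖c‖_q`, so `α ≤ ‖d‖_p`. Conversely, since `ζ` bounds the
objective on the simplex, homogeneity gives `⟨w, b - ζ⟩ ≤ α ‖w‖_q` for every `w ≥ 0`; testing this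
on the Hölder extremiser `w = d ^ (p - 1)` yields `‖d‖_p ^ p ≤ α ‖d‖_p ^ (p / q)`, i.e. `‖d‖_p ≤ α`.
Hence `∑ d_i ^ p = α ^ p`.
-/

open Finset Real

namespace SimplexDual

variable {ι : Type*} [Fintype ι]

noncomputable def pNorm (r : ℝ) (c : ι → ℝ) : ℝ := (∑ i, |c i| ^ r) ^ (1 / r)

def simplexValues (α q : ℝ) (b : ι → ℝ) : Set ℝ :=
  {y | ∃ c : ι → ℝ, (∀ i, 0 ≤ c i) ∧ ∑ i, c i = 1 ∧ y = -α * pNorm q c + ∑ i, c i * b i}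

lemma pNorm_nonneg (r : ℝ) (c : ι → ℝ) : 0 ≤ pNorm r c :=
  rpow_nonneg (sum_nonneg fun _ _ => rpow_nonneg (abs_nonneg _) r) _

lemma pNorm_pos {r : ℝ} {c : ι → ℝ} (hc : c ≠ 0) : 0 < pNorm r c := by
  obtain ⟨i, hi⟩ := Function.ne_iff.1 hc
  refine rpow_pos_of_pos (sum_pos' (fun _ _ => rpow_nonneg (abs_nonneg _) r) ?_) _
  exact ⟨i, mem_univ i, rpow_pos_of_pos (abs_pos.2 hi) r⟩

lemma pNorm_div {r : ℝ} (hr : r ≠ 0) (c : ι → ℝ) {s : ℝ} (hs : 0 ≤ s) :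
    pNorm r (fun i => c i / s) = pNorm r c / s := by
  have hsum : ∑ i, |c i / s| ^ r = (∑ i, |c i| ^ r) / s ^ r := by
    rw [sum_div]
    refine sum_congr rfl fun i _ => ?_
    rw [abs_div, abs_of_nonneg hs, div_rpow (abs_nonneg _) hs]
  rw [pNorm, pNorm, hsum, div_rpow (sum_nonneg fun i _ => rpow_nonneg (abs_nonneg _) r)
    (rpow_nonneg hs r), ← rpow_mul hs, mul_one_div_cancel hr, rpow_one]

lemma pNorm_rpow {r : ℝ} (hr : r ≠ 0) (c : ι → ℝ) : pNorm r c ^ r = ∑ i, |c i| ^ r := by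
  rw [pNorm, one_div, rpow_inv_rpow (sum_nonneg fun _ _ => rpow_nonneg (abs_nonneg _) r) hr]

lemma posPart_rpow_sub_one_mul {p : ℝ} (hp : 1 < p) (x : ℝ) : x⁺ ^ (p - 1) * x = x⁺ ^ p := by
  rcases le_or_gt x 0 with hx | hx
  · rw [posPart_eq_zero.2 hx, zero_rpow (by linarith), zero_rpow (by linarith), zero_mul]
  · rw [posPart_eq_self.2 hx.le, rpow_sub_one hx.ne', div_mul_cancel₀ _ hx.ne']

lemma pNorm_rpow_sub_one {p q : ℝ} (hpq : p.HolderConjugate q) {d : ι → ℝ} (hd : ∀ i, 0 ≤ d i) :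
    pNorm q (fun i => d i ^ (p - 1)) = (∑ i, d i ^ p) ^ (1 / q) := by
  unfold pNorm
  congr 1
  refine sum_congr rfl fun i _ => ?_
  rw [abs_of_nonneg (rpow_nonneg (hd i) _), ← rpow_mul (hd i), hpq.sub_one_mul_conj]

lemma sum_mul_sub_le_of_mem_upperBounds {α q : ℝ} (hα : 0 ≤ α) (hq : q ≠ 0) {b : ι → ℝ} {ζ : ℝ}
    (hζ : ζ ∈ upperBounds (simplexValues α q b)) {w : ι → ℝ} (hw : ∀ i, 0 ≤ w i) :
    ∑ i, w i * (b i - ζ) ≤ α * pNorm q w := by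
  set s := ∑ i, w i
  have hsplit : ∑ i, w i * (b i - ζ) = ∑ i, w i * b i - s * ζ := by
    simp only [mul_sub, sum_sub_distrib, sum_mul, s]
  rcases (sum_nonneg fun i _ => hw i : 0 ≤ s).eq_or_lt with hs | hs
  · have hw0 : ∀ i, w i = 0 := fun i =>
      (sum_eq_zero_iff_of_nonneg fun j _ => hw j).1 hs.symm i (mem_univ i)
    simpa [hw0] using mul_nonneg hα (pNorm_nonneg q w)
  have hmem := hζ ⟨fun i => w i / s, fun i => div_nonneg (hw i) hs.le,
    by rw [← sum_div, div_self hs.ne'], rfl⟩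
  rw [pNorm_div hq w hs.le] at hmem
  simp only [div_mul_eq_mul_div, ← sum_div] at hmem
  rw [hsplit]
  have key : -(α * pNorm q w) + ∑ i, w i * b i ≤ s * ζ := by
    have := mul_le_mul_of_nonneg_left hmem hs.le
    rwa [mul_add, mul_div_cancel₀ _ hs.ne', ← mul_assoc, mul_comm s, mul_assoc,
      mul_div_cancel₀ _ hs.ne', neg_mul] at this
  linarith

variable {p q α ζ : ℝ} {b : ι → ℝ}

lemma le_pNorm_posPart_of_mem (hpq : p.HolderConjugate q) (hζ : ζ ∈ simplexValues α q b) :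
    α ≤ pNorm p (fun i => (b i - ζ)⁺) := by
  obtain ⟨c, hc0, hc1, hcζ⟩ := hζ
  have hc : c ≠ 0 := fun h => by simp [h] at hc1
  have hattain : α * pNorm q c = ∑ i, c i * (b i - ζ) := by
    simp only [mul_sub, sum_sub_distrib, ← sum_mul, hc1, one_mul]
    linarith
  refine le_of_mul_le_mul_right ?_ (pNorm_pos (r := q) hc)
  calc α * pNorm q c = ∑ i, c i * (b i - ζ) := hattain
    _ ≤ ∑ i, (b i - ζ)⁺ * c i :=
        sum_le_sum fun i _ => by
          rw [mul_comm]
          exact mul_le_mul_of_nonneg_right (le_posPart _) (hc0 i)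
    _ ≤ pNorm p (fun i => (b i - ζ)⁺) * pNorm q c := inner_le_Lp_mul_Lq univ _ _ hpq

lemma pNorm_posPart_le_of_mem_upperBounds (hpq : p.HolderConjugate q) (hα : 0 ≤ α)
    (hζ : ζ ∈ upperBounds (simplexValues α q b)) :
    pNorm p (fun i => (b i - ζ)⁺) ≤ α := by
  set G := ∑ i, (b i - ζ)⁺ ^ p
  have hnorm : pNorm p (fun i => (b i - ζ)⁺) = G ^ (1 / p) := by
    simp only [pNorm, abs_of_nonneg (posPart_nonneg _), G]
  have hG : G ≤ α * G ^ (1 / q) := by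
    have := sum_mul_sub_le_of_mem_upperBounds hα hpq.symm.ne_zero hζ
      (w := fun i => (b i - ζ)⁺ ^ (p - 1)) fun i => rpow_nonneg (posPart_nonneg _) _
    simpa only [posPart_rpow_sub_one_mul hpq.lt, pNorm_rpow_sub_one hpq fun i => posPart_nonneg _]
      using this
  rw [hnorm]
  have hG0 : 0 ≤ G := sum_nonneg fun i _ => rpow_nonneg (posPart_nonneg _) p
  rcases hG0.eq_or_lt with h0 | hGpos
  · rw [← h0, zero_rpow (one_div_ne_zero hpq.ne_zero)]
    exact hα
  have hsplit : G ^ (1 / p) * G ^ (1 / q) = G := by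
    rw [← rpow_add hGpos, one_div, one_div, hpq.inv_add_inv_eq_one, rpow_one]
  exact le_of_mul_le_mul_right (hsplit.trans_le hG) (rpow_pos_of_pos hGpos _)

lemma ite_rpow_sub_eq_posPart_rpow (hp : p ≠ 0) (x y : ℝ) :
    (if y ≤ x then (x - y) ^ p else 0) = |(x - y)⁺| ^ p := by
  rw [abs_of_nonneg (posPart_nonneg _)]
  split_ifs with h
  · rw [posPart_eq_self.2 (sub_nonneg.2 h)]
  · rw [posPart_eq_zero.2 (by linarith), zero_rpow hp]

end SimplexDual

open SimplexDual in
theorem stmt9_general (A : ℕ) (b : Fin A → ℝ)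
    (α : ℝ) (hα : 0 < α) (p q : ℝ) (hp : 1 < p) (hq : q = p / (p - 1))
    (ζ : ℝ)
    (hζ : IsGreatest {y : ℝ | ∃ c : Fin A → ℝ, (∀ i, 0 ≤ c i) ∧ (∑ i, c i = 1) ∧
        y = -α * (∑ i, |c i| ^ q) ^ (1 / q) + ∑ i, c i * b i} ζ) :
    (∑ i, if ζ ≤ b i then (b i - ζ) ^ p else 0) = α ^ p := by
  have hpq : p.HolderConjugate q := hq ▸ HolderConjugate.conjExponent hp
  have hnorm : pNorm p (fun i => (b i - ζ)⁺) = α :=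
    le_antisymm (pNorm_posPart_le_of_mem_upperBounds hpq hα.le hζ.2)
      (le_pNorm_posPart_of_mem hpq hζ.1)
  simp only [ite_rpow_sub_eq_posPart_rpow hpq.ne_zero, ← pNorm_rpow hpq.ne_zero, hnorm]

/-- The value `ζ_p = max_{c ∈ Δ_A} (-α ‖c‖_q + ⟨c, b⟩)` satisfies
`∑_{i : b_i ≥ ζ_p} (b_i - ζ_p)^p = α^p`. -/
theorem stmt9 (A : ℕ) [NeZero A] (b : Fin A → ℝ)
    (hb : ∀ i j : Fin A, i ≤ j → b j ≤ b i)
    (α : ℝ) (hα : 0 < α) (p q : ℝ) (hp : 1 < p) (hq : q = p / (p - 1))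
    (ζ : ℝ)
    (hζ : IsGreatest {y : ℝ | ∃ c : Fin A → ℝ, (∀ i, 0 ≤ c i) ∧ (∑ i, c i = 1) ∧
        y = -α * (∑ i, |c i| ^ q) ^ (1 / q) + ∑ i, c i * b i} ζ) :
    (∑ i, if ζ ≤ b i then (b i - ζ) ^ p else 0) = α ^ p :=
  stmt9_general A b α hα p q hp hq ζ hζ
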